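/- Let f ∈ ℝ[x,y,z] be homogeneous of degree 4 defining a smooth complex plane quartic Q = V(f) (the gradient of f is nonzero at every nonzero complex zero of f). Let L = V(ℓ) be a real bitangent of Q with tangency points z₁, z₂, and let L∞ = V(ℓ∞) be a real line not containing z₁ or z₂. Let z̃₁, z̃₂ ∈ ℂ³ be the unique homogeneous representatives with ℓ∞(z̃ᵢ) = 1. Then: (1) for every v ∈ ℝ³ with ℓ(v) ≠ 0, the directional derivative (D_v f)(z̃ᵢ) is nonzero for i = 1, 2; (2) the product (D_v f)(z̃₁)·(D_v f)(z̃₂) is a nonzero real number; and (3) its sign is independent of the choice of v and of the labeling of z₁, z₂ — for any two choices v, v′ with ℓ(v), ℓ(v′) ≠ 0, the two products differ by the positive factor (ℓ(v′)/ℓ(v))². -/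

import Mathlib

open MvPolynomial

noncomputable section

/-- Complexification of a real ternary polynomial. -/
def cmap (f : MvPolynomial (Fin 3) ℝ) : MvPolynomial (Fin 3) ℂ :=
  MvPolynomial.map (algebraMap ℝ ℂ) f

/-- Evaluation of the complexification of `f` at a complex point. -/
def cev (f : MvPolynomial (Fin 3) ℝ) (p : Fin 3 → ℂ) : ℂ :=
  eval p (cmap f)

/-- The linear form with coefficient vector `ℓ`, evaluated at `p`. -/
def lin {R : Type*} [CommSemiring R] (ℓ p : Fin 3 → R) : R := ∑ i, ℓ i * p i

/-- The complexification of a real vector. -/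
def cvec (v : Fin 3 → ℝ) : Fin 3 → ℂ := fun i => (v i : ℂ)

/-- Smoothness of the complex plane curve V(f): the gradient is nonzero at every
nonzero complex zero of `f`. -/
def SmoothQuartic (f : MvPolynomial (Fin 3) ℝ) : Prop :=
  ∀ p : Fin 3 → ℂ, p ≠ 0 → cev f p = 0 → ∃ i, eval p (pderiv i (cmap f)) ≠ 0

/-- The line `V(ℓ)` is a bitangent of `V(f)` with tangency points `z₁, z₂`:
the restriction of `f` to the line is a nonzero scalar multiple of the square of a
nonzero quadratic form on the line, whose zeros (with multiplicity) are `z₁, z₂`.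
Over ℂ the quadratic form is written as the product of two linear forms `m₁, m₂`,
each nonzero on the line and vanishing at the corresponding tangency point. -/
def IsBitangentAt (f : MvPolynomial (Fin 3) ℝ) (ℓ z₁ z₂ : Fin 3 → ℂ) : Prop :=
  ℓ ≠ 0 ∧ z₁ ≠ 0 ∧ z₂ ≠ 0 ∧ lin ℓ z₁ = 0 ∧ lin ℓ z₂ = 0 ∧
  ∃ (m₁ m₂ : Fin 3 → ℂ) (c : ℂ), c ≠ 0 ∧
    lin m₁ z₁ = 0 ∧ lin m₂ z₂ = 0 ∧
    (∃ p, lin ℓ p = 0 ∧ lin m₁ p ≠ 0) ∧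
    (∃ p, lin ℓ p = 0 ∧ lin m₂ p ≠ 0) ∧
    (∀ p, lin ℓ p = 0 → cev f p = c * (lin m₁ p * lin m₂ p) ^ 2)

/-- The line `V(ℓ)` is a bitangent of the quartic `V(f)`. -/
def IsBitangent (f : MvPolynomial (Fin 3) ℝ) (ℓ : Fin 3 → ℂ) : Prop :=
  ∃ z₁ z₂, IsBitangentAt f ℓ z₁ z₂

/-- The set of real bitangent lines of `V(f)`, as points of the real projective
plane of lines. -/
def realBitangents (f : MvPolynomial (Fin 3) ℝ) :
    Set (Projectivization ℝ (Fin 3 → ℝ)) :=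
  {L | IsBitangent f (cvec L.rep)}

/-- Directional derivative of (the complexification of) `f` along the real vector `v`. -/
def Dv (f : MvPolynomial (Fin 3) ℝ) (v : Fin 3 → ℝ) (z : Fin 3 → ℂ) : ℂ :=
  ∑ i, (v i : ℂ) * eval z (pderiv i (cmap f))

/-- `Qtype_{L∞}(L) = ε ∈ {+1, -1}` for the real bitangent `L = V(ℓ)` of `V(f)`,
relative to the real line at infinity `V(ℓinf)`: for tangency points normalized so
that `ℓ∞(z̃ᵢ) = 1` and any real `v` with `ℓ(v) ≠ 0`, the product
`(D_v f)(z̃₁)·(D_v f)(z̃₂)` is a nonzero real number of sign `ε`. -/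
def HasQtype (f : MvPolynomial (Fin 3) ℝ) (ℓinf : Fin 3 → ℝ) (ℓ : Fin 3 → ℂ)
    (ε : ℤ) : Prop :=
  ∃ (z₁ z₂ : Fin 3 → ℂ) (v : Fin 3 → ℝ) (r : ℝ),
    IsBitangentAt f ℓ z₁ z₂ ∧
    lin (cvec ℓinf) z₁ = 1 ∧ lin (cvec ℓinf) z₂ = 1 ∧
    lin ℓ (cvec v) ≠ 0 ∧
    Dv f v z₁ * Dv f v z₂ = (r : ℂ) ∧
    ((0 < r ∧ ε = 1) ∨ (r < 0 ∧ ε = -1))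

/-- A point of ℙ²(ℂ) (given by a nonzero vector) is real. -/
def IsRealPoint (z : Fin 3 → ℂ) : Prop :=
  ∃ (w : Fin 3 → ℝ) (t : ℂ), w ≠ 0 ∧ t ≠ 0 ∧ z = t • cvec w

/-!
On the bitangent `L = V(ℓ)` the quartic restricts to `c (m₁ m₂)²`, which vanishes to second
order at each tangency point `zᵢ`; so `∇f(zᵢ)` annihilates the plane `ℓ = 0`, i.e.
`∇f(zᵢ) = μᵢ ℓ`, and `μᵢ ≠ 0` by smoothness. Hence `(D_v f)(z̃₁) (D_v f)(z̃₂) = μ₁ μ₂ ℓ(v)²`.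
Since `f`, `ℓ` and `ℓ∞` are real, complex conjugation permutes the zeros of `f` on `L` in the
chart `ℓ∞ = 1`, which are exactly `z̃₁, z̃₂` (each is cut out on `L` by one linear form `mᵢ`);
so the product is fixed by conjugation, i.e. real.
-/

open Matrix

section CrossProduct

variable {F : Type*} [Field F]

theorem exists_eq_smul_of_cross_eq_zero {v w : Fin 3 → F} (hv : v ≠ 0) (h : v ⨯₃ w = 0) :
    ∃ t : F, w = t • v := by
  by_contra! hne
  exact crossProduct_ne_zero_iff_linearIndependent.mpr
    ((LinearIndependent.pair_iff' hv).mpr fun t ht => hne t ht.symm) h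

theorem exists_eq_smul_of_forall_dotProduct_eq_zero {ℓ a : Fin 3 → F} (hℓ : ℓ ≠ 0)
    (h : ∀ w, ℓ ⬝ᵥ w = 0 → a ⬝ᵥ w = 0) : ∃ t : F, a = t • ℓ := by
  refine exists_eq_smul_of_cross_eq_zero hℓ (dotProduct_eq_zero _ fun x => ?_)
  rw [dotProduct_comm, triple_product_permutation, triple_product_permutation]
  exact h _ (dot_cross_self _ _)

theorem linearIndependent_pair_of_dotProduct {n : Type*} [Fintype n] {ℓ m p : n → F}
    (hℓ : ℓ ≠ 0) (hℓp : ℓ ⬝ᵥ p = 0) (hmp : m ⬝ᵥ p ≠ 0) : LinearIndependent F ![ℓ, m] := by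
  refine (LinearIndependent.pair_iff' hℓ).mpr fun t ht => hmp ?_
  rw [← ht, smul_dotProduct, hℓp, smul_zero]

theorem eq_of_dotProduct_eq {ℓ m n a b : Fin 3 → F} (hind : LinearIndependent F ![ℓ, m])
    (hℓa : ℓ ⬝ᵥ a = 0) (hma : m ⬝ᵥ a = 0) (hna : n ⬝ᵥ a = 1)
    (hℓb : ℓ ⬝ᵥ b = 0) (hmb : m ⬝ᵥ b = 0) (hnb : n ⬝ᵥ b = 1) : a = b := by
  have hN : ℓ ⨯₃ m ≠ 0 := crossProduct_ne_zero_iff_linearIndependent.mpr hind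
  have hker : ∀ x, ℓ ⬝ᵥ x = 0 → m ⬝ᵥ x = 0 → ∃ t : F, x = t • ℓ ⨯₃ m := fun x hℓx hmx =>
    exists_eq_smul_of_cross_eq_zero hN (by
      rw [cross_cross_eq_smul_sub_smul, hℓx, hmx, zero_smul, zero_smul, sub_zero])
  obtain ⟨s, rfl⟩ := hker a hℓa hma
  obtain ⟨t, rfl⟩ := hker b hℓb hmb
  rw [dotProduct_smul, smul_eq_mul] at hna hnb
  rw [mul_right_cancel₀ (right_ne_zero_of_mul_eq_one hna) (hna.trans hnb.symm)]

end CrossProduct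

theorem MvPolynomial.hasDerivAt_eval_add_smul {σ 𝕜 : Type*} [Fintype σ] [DecidableEq σ]
    [NontriviallyNormedField 𝕜] (F : MvPolynomial σ 𝕜) (z w : σ → 𝕜) :
    HasDerivAt (fun t : 𝕜 => eval (z + t • w) F) (∑ i, w i * eval z (pderiv i F)) 0 := by
  induction F using MvPolynomial.induction_on with
  | C a => simpa using hasDerivAt_const (0 : 𝕜) a
  | add p q hp hq =>
      simpa [mul_add, Finset.sum_add_distrib] using hp.fun_add hq
  | mul_X p j hp =>
      have hX : HasDerivAt (fun t : 𝕜 => z j + t * w j) (w j) 0 := by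
        simpa using ((hasDerivAt_id (0 : 𝕜)).mul_const (w j)).const_add (z j)
      simp only [eval_mul, eval_X, Pi.add_apply, Pi.smul_apply, smul_eq_mul]
      refine (hp.fun_mul hX).congr_deriv ?_
      simp only [Derivation.leibniz, pderiv_X, smul_eq_mul, map_add, map_mul, eval_X, mul_add,
        Finset.sum_add_distrib]
      simp [Pi.single_apply, Finset.mul_sum, mul_comm, mul_left_comm, add_comm]

theorem lin_eq_dotProduct {R : Type*} [CommSemiring R] (ℓ p : Fin 3 → R) : lin ℓ p = ℓ ⬝ᵥ p :=
  rfl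

theorem lin_smul {R : Type*} [CommSemiring R] (ℓ p : Fin 3 → R) (a : R) :
    lin ℓ (a • p) = a * lin ℓ p :=
  dotProduct_smul a ℓ p

theorem lin_cvec_star (a : Fin 3 → ℝ) (z : Fin 3 → ℂ) :
    lin (cvec a) (star z) = star (lin (cvec a) z) := by
  simp [lin, cvec, star_sum]

theorem cev_star (f : MvPolynomial (Fin 3) ℝ) (p : Fin 3 → ℂ) :
    cev f (star p) = star (cev f p) := by
  rw [cev, cev, cmap, eval_map, eval_map, Complex.star_def,
    eval₂_comp_left (starRingEnd ℂ) (algebraMap ℝ ℂ) p f]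
  congr 1
  ext r
  simp

theorem Dv_star (f : MvPolynomial (Fin 3) ℝ) (v : Fin 3 → ℝ) (z : Fin 3 → ℂ) :
    Dv f v (star z) = star (Dv f v z) := by
  simp only [Dv, star_sum, star_mul', Complex.star_def, Complex.conj_ofReal, cmap, pderiv_map]
  congr! 2
  exact cev_star _ _

theorem lin_cvec (a b : Fin 3 → ℝ) : lin (cvec a) (cvec b) = ((lin a b : ℝ) : ℂ) := by
  simp [lin, cvec]

namespace IsBitangentAt

variable {f : MvPolynomial (Fin 3) ℝ} {ℓ z₁ z₂ : Fin 3 → ℂ}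

theorem symm (h : IsBitangentAt f ℓ z₁ z₂) : IsBitangentAt f ℓ z₂ z₁ := by
  obtain ⟨hℓ, hz₁, hz₂, hℓz₁, hℓz₂, m₁, m₂, c, hc, hm₁, hm₂, hp₁, hp₂, hline⟩ := h
  exact ⟨hℓ, hz₂, hz₁, hℓz₂, hℓz₁, m₂, m₁, c, hc, hm₂, hm₁, hp₂, hp₁,
    fun p hp => (hline p hp).trans (by ring)⟩

theorem smul (h : IsBitangentAt f ℓ z₁ z₂) {a b : ℂ} (ha : a ≠ 0) (hb : b ≠ 0) :
    IsBitangentAt f ℓ (a • z₁) (b • z₂) := by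
  obtain ⟨hℓ, hz₁, hz₂, hℓz₁, hℓz₂, m₁, m₂, c, hc, hm₁, hm₂, hp₁, hp₂, hline⟩ := h
  exact ⟨hℓ, smul_ne_zero ha hz₁, smul_ne_zero hb hz₂, by rw [lin_smul, hℓz₁, mul_zero],
    by rw [lin_smul, hℓz₂, mul_zero], m₁, m₂, c, hc, by rw [lin_smul, hm₁, mul_zero],
    by rw [lin_smul, hm₂, mul_zero], hp₁, hp₂, hline⟩

theorem cev_eq_zero (h : IsBitangentAt f ℓ z₁ z₂) : cev f z₁ = 0 := by
  obtain ⟨-, -, -, hℓz₁, -, m₁, m₂, c, -, hm₁, -, -, -, hline⟩ := h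
  rw [hline z₁ hℓz₁, hm₁, zero_mul, zero_pow two_ne_zero, mul_zero]

theorem sum_mul_eval_pderiv_eq_zero (h : IsBitangentAt f ℓ z₁ z₂) {w : Fin 3 → ℂ}
    (hw : ℓ ⬝ᵥ w = 0) : ∑ i, w i * eval z₁ (pderiv i (cmap f)) = 0 := by
  obtain ⟨-, -, -, hℓz₁, -, m₁, m₂, c, -, hm₁, -, -, -, hline⟩ := h
  set g : ℂ → ℂ := fun t => c * (lin m₁ w * (lin m₂ z₁ + t * lin m₂ w)) ^ 2
  have hrestrict : (fun t : ℂ => eval (z₁ + t • w) (cmap f)) = fun t => t ^ 2 * g t := by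
    funext t
    have hℓt : lin ℓ (z₁ + t • w) = 0 := by
      rw [lin_eq_dotProduct, dotProduct_add, dotProduct_smul, ← lin_eq_dotProduct, hℓz₁, hw,
        smul_zero, add_zero]
    rw [← cev, hline _ hℓt]
    simp only [g, lin_eq_dotProduct, dotProduct_add, dotProduct_smul, smul_eq_mul] at hm₁ ⊢
    rw [hm₁]
    ring
  have hflat : HasDerivAt (fun t : ℂ => t ^ 2 * g t) 0 0 := by
    have hg : DifferentiableAt ℂ g 0 := by fun_prop
    simpa using (hasDerivAt_pow 2 (0 : ℂ)).fun_mul hg.hasDerivAt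
  exact (hasDerivAt_eval_add_smul _ _ _).unique (hrestrict ▸ hflat)

theorem exists_grad_eq_smul (hsm : SmoothQuartic f) (h : IsBitangentAt f ℓ z₁ z₂) :
    ∃ μ : ℂ, μ ≠ 0 ∧ (fun i => eval z₁ (pderiv i (cmap f))) = μ • ℓ := by
  obtain ⟨μ, hμ⟩ := exists_eq_smul_of_forall_dotProduct_eq_zero h.1 fun w hw => by
    rw [dotProduct_comm]; exact h.sum_mul_eval_pderiv_eq_zero hw
  refine ⟨μ, ?_, hμ⟩
  rintro rfl
  obtain ⟨i, hi⟩ := hsm z₁ h.2.1 h.cev_eq_zero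
  exact hi (by simpa using congrFun hμ i)

theorem exists_Dv_eq (hsm : SmoothQuartic f) (h : IsBitangentAt f ℓ z₁ z₂) :
    ∃ μ : ℂ, μ ≠ 0 ∧ ∀ v, Dv f v z₁ = μ * lin ℓ (cvec v) := by
  obtain ⟨μ, hμ, hgrad⟩ := h.exists_grad_eq_smul hsm
  refine ⟨μ, hμ, fun v => ?_⟩
  change cvec v ⬝ᵥ (fun i => eval z₁ (pderiv i (cmap f))) = _
  rw [hgrad, dotProduct_smul, smul_eq_mul, lin_eq_dotProduct, dotProduct_comm]

theorem star_eq_or {ℓ n : Fin 3 → ℝ} (h : IsBitangentAt f (cvec ℓ) z₁ z₂)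
    (h₁ : lin (cvec n) z₁ = 1) (h₂ : lin (cvec n) z₂ = 1) : star z₁ = z₁ ∨ star z₁ = z₂ := by
  have hz : cev f z₁ = 0 := h.cev_eq_zero
  obtain ⟨hℓ, -, -, hℓz₁, hℓz₂, m₁, m₂, c, hc, hm₁, hm₂, ⟨p₁, hℓp₁, hmp₁⟩, ⟨p₂, hℓp₂, hmp₂⟩,
    hline⟩ := h
  have hℓs : lin (cvec ℓ) (star z₁) = 0 := by rw [lin_cvec_star, hℓz₁, star_zero]
  have hns : lin (cvec n) (star z₁) = 1 := by rw [lin_cvec_star, h₁, star_one]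
  have hfs : c * (lin m₁ (star z₁) * lin m₂ (star z₁)) ^ 2 = 0 := by
    rw [← hline _ hℓs, cev_star, hz, star_zero]
  rcases mul_eq_zero.mp (pow_eq_zero_iff two_ne_zero |>.mp ((mul_eq_zero.mp hfs).resolve_left hc))
    with hm | hm
  · exact .inl (eq_of_dotProduct_eq (linearIndependent_pair_of_dotProduct hℓ hℓp₁ hmp₁)
      hℓs hm hns hℓz₁ hm₁ h₁)
  · exact .inr (eq_of_dotProduct_eq (linearIndependent_pair_of_dotProduct hℓ hℓp₂ hmp₂)
      hℓs hm hns hℓz₂ hm₂ h₂)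

theorem star_Dv_mul_Dv {ℓ n : Fin 3 → ℝ} (h : IsBitangentAt f (cvec ℓ) z₁ z₂)
    (h₁ : lin (cvec n) z₁ = 1) (h₂ : lin (cvec n) z₂ = 1) (v : Fin 3 → ℝ) :
    star (Dv f v z₁ * Dv f v z₂) = Dv f v z₁ * Dv f v z₂ := by
  rw [star_mul', ← Dv_star, ← Dv_star]
  rcases h.star_eq_or h₁ h₂ with e₁ | e₁ <;> rcases h.symm.star_eq_or h₂ h₁ with e₂ | e₂
  · rw [e₁, e₂]
  · rw [e₁, e₂, show z₂ = z₁ by rw [← star_star z₂, e₂, e₁]]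
  · rw [e₁, e₂, show z₁ = z₂ by rw [← star_star z₁, e₁, e₂]]
  · rw [e₁, e₂, mul_comm]

end IsBitangentAt

theorem statement14_general (f : MvPolynomial (Fin 3) ℝ)
    (hsm : SmoothQuartic f)
    (ℓ ℓinf : Fin 3 → ℝ)
    (z₁ z₂ : Fin 3 → ℂ) (hbt : IsBitangentAt f (cvec ℓ) z₁ z₂)
    (h1 : lin (cvec ℓinf) z₁ ≠ 0) (h2 : lin (cvec ℓinf) z₂ ≠ 0)
    (zt₁ zt₂ : Fin 3 → ℂ)
    (hzt₁ : zt₁ = (lin (cvec ℓinf) z₁)⁻¹ • z₁)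
    (hzt₂ : zt₂ = (lin (cvec ℓinf) z₂)⁻¹ • z₂) :
    ∀ v : Fin 3 → ℝ, lin ℓ v ≠ 0 →
      (Dv f v zt₁ ≠ 0 ∧ Dv f v zt₂ ≠ 0) ∧
      (∃ r : ℝ, r ≠ 0 ∧ Dv f v zt₁ * Dv f v zt₂ = (r : ℂ)) ∧
      (Dv f v zt₁ * Dv f v zt₂ = Dv f v zt₂ * Dv f v zt₁) ∧
      (∀ v' : Fin 3 → ℝ, lin ℓ v' ≠ 0 →
        Dv f v' zt₁ * Dv f v' zt₂ =
          (((lin ℓ v' / lin ℓ v : ℝ) : ℂ)) ^ 2 * (Dv f v zt₁ * Dv f v zt₂)) := by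
  have hbt' : IsBitangentAt f (cvec ℓ) zt₁ zt₂ :=
    hzt₁ ▸ hzt₂ ▸ hbt.smul (inv_ne_zero h1) (inv_ne_zero h2)
  have hn₁ : lin (cvec ℓinf) zt₁ = 1 := by rw [hzt₁, lin_smul, inv_mul_cancel₀ h1]
  have hn₂ : lin (cvec ℓinf) zt₂ = 1 := by rw [hzt₂, lin_smul, inv_mul_cancel₀ h2]
  obtain ⟨μ₁, hμ₁, hD₁⟩ := hbt'.exists_Dv_eq hsm
  obtain ⟨μ₂, hμ₂, hD₂⟩ := hbt'.symm.exists_Dv_eq hsm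
  simp only [lin_cvec] at hD₁ hD₂
  intro v hv
  have hvC : ((lin ℓ v : ℝ) : ℂ) ≠ 0 := Complex.ofReal_ne_zero.mpr hv
  have hne : Dv f v zt₁ * Dv f v zt₂ ≠ 0 := by
    rw [hD₁, hD₂]; exact mul_ne_zero (mul_ne_zero hμ₁ hvC) (mul_ne_zero hμ₂ hvC)
  refine ⟨⟨left_ne_zero_of_mul hne, right_ne_zero_of_mul hne⟩, ?_, mul_comm _ _,
    fun v' _ => ?_⟩
  · obtain ⟨r, hr⟩ := Complex.conj_eq_iff_real.mp (hbt'.star_Dv_mul_Dv hn₁ hn₂ v)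
    exact ⟨r, by rintro rfl; exact hne (by simpa using hr), hr⟩
  · rw [hD₁, hD₂, hD₁, hD₂, Complex.ofReal_div]
    field_simp

/-- Well-definedness of the Qtype: for a real bitangent `L = V(ℓ)` of
the smooth quartic `V(f)` with tangency points `z₁, z₂` off the real line
`L∞ = V(ℓinf)`, and normalized representatives `z̃ᵢ` with `ℓ∞(z̃ᵢ) = 1`:
(1) for every real `v` with `ℓ(v) ≠ 0` the directional derivatives `(D_v f)(z̃ᵢ)` are
nonzero; (2) their product is (a) nonzero (and) real; (3) its sign is independent of
`v` and of the labeling of `z₁, z₂`: for two choices `v, v'` the products differ by the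
positive factor `(ℓ(v')/ℓ(v))²`, and the product is symmetric in `z̃₁, z̃₂`. -/
theorem statement14 (f : MvPolynomial (Fin 3) ℝ) (hf : f.IsHomogeneous 4)
    (hsm : SmoothQuartic f)
    (ℓ ℓinf : Fin 3 → ℝ) (hℓ : ℓ ≠ 0) (hinf : ℓinf ≠ 0)
    (z₁ z₂ : Fin 3 → ℂ) (hbt : IsBitangentAt f (cvec ℓ) z₁ z₂)
    (h1 : lin (cvec ℓinf) z₁ ≠ 0) (h2 : lin (cvec ℓinf) z₂ ≠ 0)
    (zt₁ zt₂ : Fin 3 → ℂ)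
    (hzt₁ : zt₁ = (lin (cvec ℓinf) z₁)⁻¹ • z₁)
    (hzt₂ : zt₂ = (lin (cvec ℓinf) z₂)⁻¹ • z₂) :
    ∀ v : Fin 3 → ℝ, lin ℓ v ≠ 0 →
      (Dv f v zt₁ ≠ 0 ∧ Dv f v zt₂ ≠ 0) ∧
      (∃ r : ℝ, r ≠ 0 ∧ Dv f v zt₁ * Dv f v zt₂ = (r : ℂ)) ∧
      (Dv f v zt₁ * Dv f v zt₂ = Dv f v zt₂ * Dv f v zt₁) ∧
      (∀ v' : Fin 3 → ℝ, lin ℓ v' ≠ 0 →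
        Dv f v' zt₁ * Dv f v' zt₂ =
          (((lin ℓ v' / lin ℓ v : ℝ) : ℂ)) ^ 2 * (Dv f v zt₁ * Dv f v zt₂)) :=
  statement14_general f hsm ℓ ℓinf z₁ z₂ hbt h1 h2 zt₁ zt₂ hzt₁ hzt₂

end
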